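/- arXiv:2209.05065 — 4 statements merged into one kernel-verified Lean document; each statement's English description precedes it below -/
import Mathlib

section
/- Let ω₁, ω₂ ∈ ℂ with Im(ω₁/ω₂) > 0 and let Λ = {m·ω₁ + n·ω₂ : m, n ∈ ℤ}. If f : ℂ → ℂ is entire (complex differentiable on all of ℂ) and for every α ∈ Λ and every z ∈ ℂ one has f(z + α) − f(z) ∈ Λ, then there exist a, b ∈ ℂ such that f(z) = a·z + b for all z ∈ ℂ, and moreover a·α ∈ Λ for every α ∈ Λ. -/
open MeasureTheory Set Bornology

lemma lattice_countable' (ω₁ ω₂ : ℂ) :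
    ({z : ℂ | ∃ m n : ℤ, z = m * ω₁ + n * ω₂}).Countable := by
  have : {z : ℂ | ∃ m n : ℤ, z = m * ω₁ + n * ω₂} ⊆
      Set.range (fun p : ℤ × ℤ => (p.1 : ℂ) * ω₁ + (p.2 : ℂ) * ω₂) := by
    rintro z ⟨m, n, rfl⟩; exact ⟨(m, n), rfl⟩
  exact (Set.countable_range _).mono this

lemma const_of_countable_image {g : ℂ → ℂ} (hg : Differentiable ℂ g) {s : Set ℂ}
    (hs : s.Countable) (hgs : ∀ z, g z ∈ s) : ∀ z, g z = g 0 := by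
  have h := (Complex.analyticOnNhd_univ_iff_differentiable.mpr hg).is_constant_or_isOpen
    isPreconnected_univ
  rcases h with ⟨w, hw⟩ | h
  · intro z; rw [hw z trivial, hw 0 trivial]
  · exfalso
    have hopen : IsOpen (g '' Set.univ) := h _ subset_rfl isOpen_univ
    have hne : (g '' Set.univ).Nonempty := ⟨g 0, 0, trivial, rfl⟩
    have hpos : 0 < volume (g '' Set.univ) := hopen.measure_pos volume hne
    have hsub : g '' Set.univ ⊆ s := by rintro _ ⟨z, -, rfl⟩; exact hgs z
    have : volume (g '' Set.univ) = 0 :=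
      measure_mono_null hsub (hs.measure_zero volume)
    exact hpos.ne' this


/-- The lattice `Λ(ω₁, ω₂) = {m·ω₁ + n·ω₂ : m, n ∈ ℤ}` as an additive subgroup of `ℂ`. -/
noncomputable def lattice (ω₁ ω₂ : ℂ) : AddSubgroup ℂ where
  carrier := {z : ℂ | ∃ m n : ℤ, z = m * ω₁ + n * ω₂}
  zero_mem' := ⟨0, 0, by simp⟩
  add_mem' := by
    rintro x y ⟨m, n, rfl⟩ ⟨m', n', rfl⟩
    exact ⟨m + m', n + n', by push_cast; ring⟩
  neg_mem' := by
    rintro x ⟨m, n, rfl⟩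
    exact ⟨-m, -n, by push_cast; ring⟩

/-- Every entire function `f : ℂ → ℂ` such that `f (z + α) - f z ∈ Λ(ω₁, ω₂)` for all
`α ∈ Λ(ω₁, ω₂)` and `z ∈ ℂ` is of the form `f z = a * z + b` with `a·Λ ⊆ Λ`. -/
theorem entire_descends_to_torus_is_affine (ω₁ ω₂ : ℂ) (hτ : 0 < (ω₁ / ω₂).im)
    (f : ℂ → ℂ) (hf : Differentiable ℂ f)
    (hper : ∀ α ∈ lattice ω₁ ω₂, ∀ z : ℂ, f (z + α) - f z ∈ lattice ω₁ ω₂) :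
    ∃ a b : ℂ, (∀ z : ℂ, f z = a * z + b) ∧
      ∀ α ∈ lattice ω₁ ω₂, a * α ∈ lattice ω₁ ω₂ := by
  have hcount : ({z : ℂ | ∃ m n : ℤ, z = m * ω₁ + n * ω₂}).Countable :=
    lattice_countable' ω₁ ω₂
  -- Step 1: each difference is constant
  have hconst : ∀ α ∈ lattice ω₁ ω₂, ∀ z : ℂ, f (z + α) - f z = f (0 + α) - f 0 := by
    intro α hα z
    have hg : Differentiable ℂ (fun w : ℂ => f (w + α) - f w) :=
      (hf.comp (differentiable_id.add_const α)).sub hf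
    exact const_of_countable_image hg hcount (fun w => hper α hα w) z
  -- Step 2: deriv f is periodic
  have hder : ∀ α ∈ lattice ω₁ ω₂, ∀ z : ℂ, deriv f (z + α) = deriv f z := by
    intro α hα z
    have h1 : (fun w : ℂ => f (w + α)) = fun w => f w + (f (0 + α) - f 0) := by
      funext w
      have := hconst α hα w
      linear_combination this
    calc deriv f (z + α) = deriv (fun w : ℂ => f (w + α)) z :=
          (deriv_comp_add_const f α z).symm
      _ = deriv (fun w => f w + (f (0 + α) - f 0)) z := by rw [h1]
      _ = deriv f z := deriv_add_const _
  -- determinant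
  have hD : ω₁.im * ω₂.re - ω₁.re * ω₂.im ≠ 0 := by
    intro h
    rw [Complex.div_im, div_sub_div_same, h, zero_div] at hτ
    exact lt_irrefl 0 hτ
  -- Step 3: deriv f bounded
  have hf' : Differentiable ℂ (deriv f) := fun z =>
    (((Complex.analyticOnNhd_univ_iff_differentiable.mpr hf).deriv) z trivial).differentiableAt
  set K : Set ℂ := (fun p : ℝ × ℝ => (p.1 : ℂ) * ω₁ + (p.2 : ℂ) * ω₂) ''
    (Set.Icc (0:ℝ) 1 ×ˢ Set.Icc (0:ℝ) 1) with hKdef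
  have hK : IsCompact K :=
    (isCompact_Icc.prod isCompact_Icc).image (by fun_prop)
  have hcover : ∀ z : ℂ, ∃ w ∈ K, deriv f z = deriv f w := by
    intro z
    set D := ω₁.im * ω₂.re - ω₁.re * ω₂.im with hDdef
    set s : ℝ := (z.im * ω₂.re - z.re * ω₂.im) / D with hs
    set t : ℝ := (z.re * ω₁.im - z.im * ω₁.re) / D with ht
    have hz : z = (s : ℂ) * ω₁ + (t : ℂ) * ω₂ := by
      apply Complex.ext
      · simp only [Complex.add_re, Complex.mul_re, Complex.ofReal_re, Complex.ofReal_im,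
          hs, ht]
        field_simp
        ring
      · simp only [Complex.add_im, Complex.mul_im, Complex.ofReal_re, Complex.ofReal_im,
          hs, ht]
        field_simp
        ring
    refine ⟨((Int.fract s : ℝ) : ℂ) * ω₁ + ((Int.fract t : ℝ) : ℂ) * ω₂, ⟨(Int.fract s, Int.fract t),
      ⟨⟨(Int.fract_nonneg s), (Int.fract_lt_one s).le⟩,
       ⟨(Int.fract_nonneg t), (Int.fract_lt_one t).le⟩⟩, rfl⟩, ?_⟩
    have hα : ((⌊s⌋ : ℂ) * ω₁ + (⌊t⌋ : ℂ) * ω₂) ∈ lattice ω₁ ω₂ := ⟨⌊s⌋, ⌊t⌋, rfl⟩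
    have hsplit : z = (((Int.fract s : ℝ) : ℂ) * ω₁ + ((Int.fract t : ℝ) : ℂ) * ω₂) +
        ((⌊s⌋ : ℂ) * ω₁ + (⌊t⌋ : ℂ) * ω₂) := by
      rw [hz]
      have h1 : (s : ℂ) = ((Int.fract s : ℝ) : ℂ) + (⌊s⌋ : ℂ) := by
        rw [← Complex.ofReal_intCast, ← Complex.ofReal_add, Int.fract_add_floor]
      have h2 : (t : ℂ) = ((Int.fract t : ℝ) : ℂ) + (⌊t⌋ : ℂ) := by
        rw [← Complex.ofReal_intCast, ← Complex.ofReal_add, Int.fract_add_floor]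
      rw [h1, h2]; ring
    rw [hsplit, hder _ hα]
  have hbdd : IsBounded (Set.range (deriv f)) := by
    apply ((hK.image hf'.continuous).isBounded).subset
    rintro _ ⟨z, rfl⟩
    obtain ⟨w, hw, he⟩ := hcover z
    exact ⟨w, hw, he.symm⟩
  -- Step 4: Liouville
  have hda : ∀ z : ℂ, deriv f z = deriv f 0 := fun z =>
    hf'.apply_eq_apply_of_bounded hbdd z 0
  have hform : ∀ z : ℂ, f z = deriv f 0 * z + f 0 := by
    have hgdiff : Differentiable ℂ (fun z : ℂ => f z - deriv f 0 * z) :=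
      hf.sub (differentiable_id.const_mul _)
    have hgz : ∀ z : ℂ, deriv (fun z : ℂ => f z - deriv f 0 * z) z = 0 := by
      intro z
      have h : HasDerivAt (fun z : ℂ => f z - deriv f 0 * z)
          (deriv f z - deriv f 0 * 1) z :=
        ((hf z).hasDerivAt).sub ((hasDerivAt_id' z).const_mul (deriv f 0))
      rw [h.deriv, hda z]; ring
    intro z
    have := is_const_of_deriv_eq_zero hgdiff hgz z 0
    simp only [mul_zero, sub_zero] at this
    linear_combination this
  refine ⟨deriv f 0, f 0, hform, ?_⟩
  intro α hα
  have h := hper α hα 0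
  have he : deriv f 0 * α = f (0 + α) - f 0 := by
    rw [hform (0 + α), hform 0]; ring
  rw [he]
  exact h
end

section
/- Let ω₁, ω₂ ∈ ℂ with Im(ω₁/ω₂) > 0 and Λ = {m·ω₁ + n·ω₂ : m, n ∈ ℤ}, and let T be the set of all maps ℂ/Λ → ℂ/Λ of the form f̄_{a,b} ([z] ↦ [a·z + b]) with a, b ∈ ℂ and a·Λ ⊆ Λ. Then: (i) T is closed under the pointwise heap operation [f,g,h](X) = f(X) − g(X) + h(X); (ii) T is closed under composition; (iii) for all f, g, h, k ∈ T, f ∘ [g,h,k] = [f∘g, f∘h, f∘k] and [g,h,k] ∘ f = [g∘f, h∘f, k∘f]. Hence T is a truss: an abelian heap with an associative multiplication distributing over the heap operation on both sides. -/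
/-- For `a, b ∈ ℂ` with `a·Λ ⊆ Λ`, the map `f̄_{a,b} : ℂ/Λ → ℂ/Λ`, `[z] ↦ [a·z + b]`,
induced by the affine map `z ↦ a·z + b`. -/
noncomputable def fbar (ω₁ ω₂ a b : ℂ)
    (ha : ∀ α ∈ lattice ω₁ ω₂, a * α ∈ lattice ω₁ ω₂) :
    ℂ ⧸ lattice ω₁ ω₂ → ℂ ⧸ lattice ω₁ ω₂ :=
  Quotient.map' (fun z => a * z + b) (fun x y hxy => by
    rw [QuotientAddGroup.leftRel_apply] at hxy ⊢
    have h : -(a * x + b) + (a * y + b) = a * (-x + y) := by ring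
    rw [h]
    exact ha _ hxy)

/-- If `a·Λ ⊆ Λ` and `a'·Λ ⊆ Λ`, then `(a·a')·Λ ⊆ Λ`. -/
theorem mul_mem_R {ω₁ ω₂ a a' : ℂ}
    (ha : ∀ α ∈ lattice ω₁ ω₂, a * α ∈ lattice ω₁ ω₂)
    (ha' : ∀ α ∈ lattice ω₁ ω₂, a' * α ∈ lattice ω₁ ω₂) :
    ∀ α ∈ lattice ω₁ ω₂, (a * a') * α ∈ lattice ω₁ ω₂ := fun α hα => by
  rw [mul_assoc]; exact ha _ (ha' _ hα)

/-- The set `T` of all endomorphisms of `ℂ/Λ` induced by affine maps `z ↦ a·z + b`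
with `a·Λ ⊆ Λ`. -/
def Tset (ω₁ ω₂ : ℂ) : Set (ℂ ⧸ lattice ω₁ ω₂ → ℂ ⧸ lattice ω₁ ω₂) :=
  {f | ∃ (a b : ℂ) (ha : ∀ α ∈ lattice ω₁ ω₂, a * α ∈ lattice ω₁ ω₂),
    f = fbar ω₁ ω₂ a b ha}

/-- The pointwise heap operation `[f,g,h](X) = f(X) - g(X) + h(X)` on maps `ℂ/Λ → ℂ/Λ`. -/
noncomputable def hop {ω₁ ω₂ : ℂ} (f g h : ℂ ⧸ lattice ω₁ ω₂ → ℂ ⧸ lattice ω₁ ω₂) :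
    ℂ ⧸ lattice ω₁ ω₂ → ℂ ⧸ lattice ω₁ ω₂ :=
  fun X => f X - g X + h X

lemma fbar_mk (ω₁ ω₂ a b : ℂ)
    (ha : ∀ α ∈ lattice ω₁ ω₂, a * α ∈ lattice ω₁ ω₂) (z : ℂ) :
    fbar ω₁ ω₂ a b ha ((z : ℂ ⧸ lattice ω₁ ω₂)) = ((a * z + b : ℂ) : ℂ ⧸ lattice ω₁ ω₂) :=
  rfl

/-- The set `T` of induced endomorphisms of `ℂ/Λ` is closed under the pointwise heap
operation and under composition, and composition distributes over the heap operation on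
both sides: `T` is a truss. -/
theorem Tset_truss (ω₁ ω₂ : ℂ) (hτ : 0 < (ω₁ / ω₂).im) :
    (∀ f ∈ Tset ω₁ ω₂, ∀ g ∈ Tset ω₁ ω₂, ∀ h ∈ Tset ω₁ ω₂, hop f g h ∈ Tset ω₁ ω₂) ∧
    (∀ f ∈ Tset ω₁ ω₂, ∀ g ∈ Tset ω₁ ω₂, f ∘ g ∈ Tset ω₁ ω₂) ∧
    (∀ f ∈ Tset ω₁ ω₂, ∀ g ∈ Tset ω₁ ω₂, ∀ h ∈ Tset ω₁ ω₂, ∀ k ∈ Tset ω₁ ω₂,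
      f ∘ hop g h k = hop (f ∘ g) (f ∘ h) (f ∘ k) ∧
      hop g h k ∘ f = hop (g ∘ f) (h ∘ f) (k ∘ f)) := by
  refine ⟨?_, ?_, ?_⟩
  · rintro _ ⟨a, b, ha, rfl⟩ _ ⟨c, d, hc, rfl⟩ _ ⟨e, j, he, rfl⟩
    refine ⟨a - c + e, b - d + j, fun α hα => ?_, ?_⟩
    · have : (a - c + e) * α = a * α - c * α + e * α := by ring
      rw [this]
      exact add_mem (sub_mem (ha _ hα) (hc _ hα)) (he _ hα)
    · funext X
      induction X using Quotient.inductionOn' with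
      | h z =>
        show _ = fbar ω₁ ω₂ _ _ _ (QuotientAddGroup.mk z)
        simp only [hop, fbar_mk]
        rw [← QuotientAddGroup.mk_sub, ← QuotientAddGroup.mk_add]
        congr 1
        ring
  · rintro _ ⟨a, b, ha, rfl⟩ _ ⟨c, d, hc, rfl⟩
    refine ⟨a * c, a * d + b, mul_mem_R ha hc, ?_⟩
    funext X
    induction X using Quotient.inductionOn' with
    | h z =>
      show fbar ω₁ ω₂ a b ha (fbar ω₁ ω₂ c d hc (QuotientAddGroup.mk z)) = _
      simp only [fbar_mk]
      congr 1
      ring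
  · rintro _ ⟨a, b, ha, rfl⟩ _ ⟨c, d, hc, rfl⟩ _ ⟨e, j, he, rfl⟩ _ ⟨p, q, hp, rfl⟩
    constructor <;> funext X <;>
      induction X using Quotient.inductionOn' with
      | h z =>
        show _ = _
        simp only [hop, Function.comp_apply, fbar_mk,
          ← QuotientAddGroup.mk_sub, ← QuotientAddGroup.mk_add, fbar_mk]
        all_goals (congr 1; ring)
end

section
/- Let ω₁, ω₂ ∈ ℂ with Im(ω₁/ω₂) > 0 and Λ = {m·ω₁ + n·ω₂ : m, n ∈ ℤ}. There is no map Θ : ℂ/Λ → ℂ/Λ such that for all a, b ∈ ℂ with a·Λ ⊆ Λ, the induced endomorphism f̄_{a,b} ([z] ↦ [a·z + b]) satisfies both f̄_{a,b} ∘ Θ = Θ and Θ ∘ f̄_{a,b} = Θ. Consequently the truss of endomorphisms of the elliptic curve ℂ/Λ does not arise from a ring. -/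
/-- There is no map `Θ : ℂ/Λ → ℂ/Λ` absorbing all induced endomorphisms `f̄_{a,b}` on both
sides; consequently the truss of endomorphisms of `ℂ/Λ` does not arise from a ring. -/
theorem no_absorber (ω₁ ω₂ : ℂ) (hτ : 0 < (ω₁ / ω₂).im) :
    ¬ ∃ Θ : ℂ ⧸ lattice ω₁ ω₂ → ℂ ⧸ lattice ω₁ ω₂,
      ∀ (a b : ℂ) (ha : ∀ α ∈ lattice ω₁ ω₂, a * α ∈ lattice ω₁ ω₂),
        fbar ω₁ ω₂ a b ha ∘ Θ = Θ ∧ Θ ∘ fbar ω₁ ω₂ a b ha = Θ := by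
  rintro ⟨Θ, hΘ⟩
  have h0 : ∀ α ∈ lattice ω₁ ω₂, (0 : ℂ) * α ∈ lattice ω₁ ω₂ := by
    intro α _; rw [zero_mul]; exact (lattice ω₁ ω₂).zero_mem
  -- Θ is constantly [b] for each b
  have key : ∀ b : ℂ, Θ ((0 : ℂ) : ℂ ⧸ lattice ω₁ ω₂) = ((b : ℂ) : ℂ ⧸ lattice ω₁ ω₂) := by
    intro b
    have := congrFun (hΘ 0 b h0).1 ((0 : ℂ) : ℂ ⧸ lattice ω₁ ω₂)
    rw [Function.comp_apply] at this
    rw [← this]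
    obtain ⟨z, hz⟩ := Quotient.exists_rep (Θ ((0 : ℂ) : ℂ ⧸ lattice ω₁ ω₂))
    rw [← hz]
    show ((0 * z + b : ℂ) : ℂ ⧸ lattice ω₁ ω₂) = _
    norm_num
  have h01 : ((0 : ℂ) : ℂ ⧸ lattice ω₁ ω₂) = ((ω₂ / 2 : ℂ) : ℂ ⧸ lattice ω₁ ω₂) := by
    rw [← key 0, ← key (ω₂ / 2)]
  have hmem : ω₂ / 2 ∈ lattice ω₁ ω₂ := by
    have := (QuotientAddGroup.eq).mp h01
    simpa using this
  obtain ⟨m, n, hmn⟩ := hmem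
  have hω₂ : ω₂ ≠ 0 := by
    intro h; rw [h, div_zero] at hτ; simp at hτ
  by_cases hm : (m : ℂ) = 0
  · have h : (1 : ℂ) * ω₂ = ((n : ℂ) * 2) * ω₂ := by
      linear_combination 2 * hmn + 2 * ω₁ * hm
    have h2 : (1 : ℂ) = (n : ℂ) * 2 := mul_right_cancel₀ hω₂ h
    have h3 : (1 : ℤ) = n * 2 := by exact_mod_cast h2
    omega
  · have : ω₁ / ω₂ = (1 / 2 - n) / m := by
      field_simp
      linear_combination -2 * hmn
    rw [this] at hτ
    have : ((1 / 2 - (n : ℂ)) / (m : ℂ)).im = 0 := by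
      have h1 : ((1 / 2 - (n : ℂ)) / (m : ℂ)) = (((1 / 2 - (n : ℝ)) / (m : ℝ) : ℝ) : ℂ) := by
        push_cast; ring
      rw [h1, Complex.ofReal_im]
    rw [this] at hτ
    exact lt_irrefl 0 hτ
end

section
/- Let p, q ∈ ℚ with q > 0, let d be a positive integer, and set τ = p + q·√d·i ∈ ℂ. Let Λ = {m·τ + n : m, n ∈ ℤ}. Then {r ∈ ℂ : r·α ∈ Λ for all α ∈ Λ} = {m + n·τ : m, n ∈ ℤ such that 2·n·p ∈ ℤ and n·(p² + d·q²) ∈ ℤ}. -/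
lemma mem_lattice {ω₁ ω₂ z : ℂ} : z ∈ lattice ω₁ ω₂ ↔ ∃ m n : ℤ, z = m * ω₁ + n * ω₂ :=
  Iff.rfl

/-- For `τ = p + q·√d·i` with `p, q ∈ ℚ`, `q > 0` and `d` a positive integer, the multiplier
ring of `Λ(τ, 1)` is `{m + n·τ : m, n ∈ ℤ, 2·n·p ∈ ℤ and n·(p² + d·q²) ∈ ℤ}`. -/
theorem multiplier_ring_complex_multiplication (p q : ℚ) (hq : 0 < q) (d : ℕ) (hd : 0 < d)
    (τ : ℂ) (hτ : τ = (p : ℂ) + (q : ℂ) * Real.sqrt d * Complex.I) :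
    {r : ℂ | ∀ α ∈ lattice τ 1, r * α ∈ lattice τ 1} =
      {z : ℂ | ∃ m n : ℤ, z = m + n * τ ∧
        (∃ k : ℤ, 2 * (n : ℚ) * p = k) ∧ (∃ l : ℤ, (n : ℚ) * (p ^ 2 + d * q ^ 2) = l)} := by
  have hs0 : (0:ℝ) < Real.sqrt d := Real.sqrt_pos.mpr (by positivity)
  set s : ℝ := Real.sqrt d with hs
  have him : τ.im = q * s := by simp [hτ]
  have hre : τ.re = p := by simp [hτ]
  have hqs : (q:ℝ) * s ≠ 0 := by positivity
  have hsd : (s:ℂ) * (s:ℂ) = (d:ℂ) := by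
    norm_cast
    exact Real.mul_self_sqrt (by positivity)
  have hτ2 : τ * τ = 2*(p:ℂ)*τ - ((p:ℂ)^2 + (d:ℂ)*(q:ℂ)^2) := by
    rw [hτ]
    linear_combination (q:ℂ)^2*(s:ℂ)*(s:ℂ)*Complex.I_mul_I - (q:ℂ)^2*hsd
  have huniq : ∀ x y x' y' : ℝ, (x:ℂ) * τ + y = (x':ℂ) * τ + y' → x = x' ∧ y = y' := by
    intro x y x' y' h
    have h1 := congrArg Complex.im h
    simp only [Complex.add_im, Complex.mul_im, Complex.ofReal_im, Complex.ofReal_re,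
      him, hre, zero_mul, mul_zero, add_zero, zero_add] at h1
    have hx : x = x' := by
      have h1' : x * (q * s) = x' * (q * s) := by linarith
      exact mul_right_cancel₀ hqs h1'
    refine ⟨hx, ?_⟩
    have h2 := congrArg Complex.re h
    simp only [Complex.add_re, Complex.mul_re, Complex.ofReal_im, Complex.ofReal_re,
      him, hre, zero_mul, mul_zero, add_zero, zero_add, sub_zero, hx] at h2
    linarith
  ext r
  simp only [Set.mem_setOf_eq]
  constructor
  · intro hr
    obtain ⟨m₀, n₀, h1⟩ := mem_lattice.mp (hr 1 ⟨0, 1, by simp⟩)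
    rw [mul_one] at h1
    obtain ⟨m₁, n₁, h2⟩ := mem_lattice.mp (hr τ ⟨1, 0, by simp⟩)
    set A : ℚ := 2*p*m₀ + n₀ with hA
    set B : ℚ := -m₀*(p^2 + d*q^2) with hB
    have key : ((A:ℝ):ℂ) * τ + ((B:ℝ):ℂ) = ((m₁:ℝ):ℂ) * τ + ((n₁:ℝ):ℂ) := by
      push_cast [hA, hB]
      linear_combination h2 - τ * h1 - (m₀:ℂ) * hτ2
    obtain ⟨hAeq, hBeq⟩ := huniq _ _ _ _ key
    have hA' : A = (m₁:ℚ) := by exact_mod_cast hAeq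
    have hB' : B = (n₁:ℚ) := by exact_mod_cast hBeq
    refine ⟨n₀, m₀, by rw [h1]; ring, ⟨m₁ - n₀, ?_⟩, ⟨-n₁, ?_⟩⟩
    · push_cast
      rw [← hA']
      rw [hA]; ring
    · push_cast
      rw [← hB', hB]; ring
  · rintro ⟨m, n, rfl, ⟨k, hk⟩, ⟨l, hl⟩⟩
    rintro α ⟨a, b, rfl⟩
    have hkC : 2*(n:ℂ)*(p:ℂ) = (k:ℂ) := by exact_mod_cast hk
    have hlC : (n:ℂ)*((p:ℂ)^2 + (d:ℂ)*(q:ℂ)^2) = (l:ℂ) := by exact_mod_cast hl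
    refine ⟨a*m + b*n + a*k, b*m - a*l, ?_⟩
    push_cast
    linear_combination (n:ℂ)*(a:ℂ)*hτ2 + (a:ℂ)*τ*hkC - (a:ℂ)*hlC
end
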